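/- arXiv:1810.05773 — 2 statements merged into one kernel-verified Lean document; each statement's English description precedes it below -/
import Mathlib

section
/- For H < 0, the function sn_H(r) = sinh(√(-H) r)/√(-H) satisfies: the function f(L) = (∫_L^{L+R} sn_H(r)^{n-1} dr) / sn_H(L)^{n-1} is strictly decreasing in L for L > 0, for any fixed R > 0 and n ≥ 2. -/
open MeasureTheory Real Set

/-!
Substituting `r = L + t` turns `f L` into `∫ t in 0..R, (sn (L + t) / sn L) ^ (n - 1)`, and for each
`t > 0` the ratio `sinh (x + t) / sinh x` is strictly decreasing in `x > 0`, because
`sinh (x + t) sinh y - sinh (y + t) sinh x = sinh t sinh (y - x)`.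
-/

lemma sinh_add_div_sinh_lt_of_lt {x y t : ℝ} (hx : 0 < x) (hxy : x < y) (ht : 0 < t) :
    sinh (y + t) / sinh y < sinh (x + t) / sinh x := by
  have hsx : 0 < sinh x := sinh_pos_iff.mpr hx
  have hsy : 0 < sinh y := sinh_pos_iff.mpr (hx.trans hxy)
  rw [div_lt_div_iff₀ hsy hsx]
  have hcross : sinh (x + t) * sinh y - sinh (y + t) * sinh x = sinh t * sinh (y - x) := by
    rw [sinh_add, sinh_add, sinh_sub]; ring
  have := mul_pos (sinh_pos_iff.mpr ht) (sinh_pos_iff.mpr (sub_pos.mpr hxy))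
  linarith

lemma strictAntiOn_sinh_mul_add_div_sinh_mul_pow {a t : ℝ} (ha : 0 < a) (ht : 0 < t) {k : ℕ}
    (hk : k ≠ 0) :
    StrictAntiOn (fun x => (sinh (a * (x + t)) / sinh (a * x)) ^ k) (Ioi 0) := by
  intro x hx y hy hxy
  rw [mem_Ioi] at hx hy
  have hlt := sinh_add_div_sinh_lt_of_lt (mul_pos ha hx) (mul_lt_mul_of_pos_left hxy ha)
    (mul_pos ha ht)
  rw [← mul_add, ← mul_add] at hlt
  have hpos : 0 < sinh (a * (y + t)) / sinh (a * y) :=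
    div_pos (sinh_pos_iff.mpr (by positivity)) (sinh_pos_iff.mpr (by positivity))
  exact pow_lt_pow_left₀ hlt hpos.le hk

lemma intervalIntegral_pow_div_pow (g : ℝ → ℝ) (k : ℕ) (L R : ℝ) :
    (∫ r in L..(L + R), g r ^ k) / g L ^ k = ∫ t in 0..R, (g (L + t) / g L) ^ k := by
  simp_rw [div_pow, intervalIntegral.integral_div,
    intervalIntegral.integral_comp_add_left (fun r => g r ^ k) L, add_zero]

lemma strictAntiOn_intervalIntegral {φ : ℝ → ℝ → ℝ} {s : Set ℝ} {a b : ℝ} (hab : a < b)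
    (hcont : ∀ x ∈ s, ContinuousOn (φ x) (Icc a b))
    (hanti : ∀ t ∈ Ioc a b, StrictAntiOn (φ · t) s) :
    StrictAntiOn (fun x => ∫ t in a..b, φ x t) s := fun x hx y hy hxy =>
  intervalIntegral.integral_lt_integral_of_continuousOn_of_le_of_exists_lt hab (hcont y hy)
    (hcont x hx) (fun t ht => (hanti t ht hx hy hxy).le)
    ⟨b, right_mem_Icc.2 hab.le, hanti b (right_mem_Ioc.2 hab) hx hy hxy⟩

theorem stmt0 (H R : ℝ) (hH : H < 0) (hR : 0 < R) (n : ℕ) (hn : 2 ≤ n)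
    (sn f : ℝ → ℝ)
    (hsn : ∀ r, sn r = Real.sinh (Real.sqrt (-H) * r) / Real.sqrt (-H))
    (hf : ∀ L, f L = (∫ r in L..(L + R), sn r ^ (n - 1)) / sn L ^ (n - 1)) :
    StrictAntiOn f (Set.Ioi 0) := by
  have ha : 0 < √(-H) := sqrt_pos.mpr (neg_pos.mpr hH)
  have hratio : ∀ L t, sn (L + t) / sn L = sinh (√(-H) * (L + t)) / sinh (√(-H) * L) := by
    intro L t
    rw [hsn, hsn, div_div_div_cancel_right₀ ha.ne']
  have hf' : f = fun L => ∫ t in 0..R, (sinh (√(-H) * (L + t)) / sinh (√(-H) * L)) ^ (n - 1) := by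
    funext L
    rw [hf, intervalIntegral_pow_div_pow]
    simp_rw [hratio]
  rw [hf']
  exact strictAntiOn_intervalIntegral hR (fun L _ => Continuous.continuousOn (by fun_prop))
    fun t ht => strictAntiOn_sinh_mul_add_div_sinh_mul_pow ha ht.1 (by omega)
end

section
/- Let A be a measurable set in a measure space covered by finitely many measurable sets B₁,...,B_N, and let f ≥ 0 be integrable. Suppose for each i there is a subset B'_i ⊆ B_i with the B'_i pairwise disjoint, B'_i ⊆ A, and μ(B_i) ≤ Λ μ(B'_i) for a constant Λ ≥ 1. If (1/μ(B_i)) ∫_{B_i} f ≤ k^p for all i, then (1/μ(A)) ∫_A f ≤ Λ k^p. -/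
/-!
Cover `A` by the `B i` and bound each average by `k ^ p`:
`∫_A f ≤ ∑ ∫_{B i} f ≤ k ^ p ∑ μ(B i) ≤ Λ k ^ p ∑ μ(B' i) ≤ Λ k ^ p μ(A)`,
where the last step holds because the `B' i` are disjoint subsets of `A`.
-/

open MeasureTheory

section

variable {Ω ι : Type*} [MeasurableSpace Ω] {μ : Measure Ω} [Fintype ι]

theorem setIntegral_le_sum_setIntegral_of_subset_iUnion {A : Set Ω} {B : ι → Set Ω} {f : Ω → ℝ}
    (hf : 0 ≤ᵐ[μ] f) (hfi : ∀ i, IntegrableOn f (B i) μ) (hcover : A ⊆ ⋃ i, B i) :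
    ∫ ω in A, f ω ∂μ ≤ ∑ i, ∫ ω in B i, f ω ∂μ := by
  have hle : μ.restrict A ≤ ∑ i, μ.restrict (B i) := by
    rw [← Measure.sum_fintype]
    exact (Measure.restrict_mono hcover le_rfl).trans Measure.restrict_iUnion_le
  have hf' : 0 ≤ᵐ[∑ i, μ.restrict (B i)] f := by
    rw [← Measure.sum_fintype]
    exact Measure.ae_sum_iff.2 fun i => ae_restrict_of_ae hf
  calc ∫ ω in A, f ω ∂μ ≤ ∫ ω, f ω ∂(∑ i, μ.restrict (B i)) :=
        integral_mono_measure hle hf' (integrable_finsetSum_measure.2 fun i _ => hfi i)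
    _ = ∑ i, ∫ ω in B i, f ω ∂μ := integral_finsetSum_measure fun i _ => hfi i

theorem sum_measureReal_le_of_pairwise_disjoint {A : Set Ω} {B : ι → Set Ω}
    (hmeas : ∀ i, MeasurableSet (B i)) (hdisj : Pairwise fun i j => Disjoint (B i) (B j))
    (hsub : ∀ i, B i ⊆ A) (hA : μ A ≠ ⊤) :
    ∑ i, μ.real (B i) ≤ μ.real A := by
  have hfin : ∀ i, μ (B i) ≠ ⊤ := fun i => ne_top_of_le_ne_top hA (measure_mono (hsub i))
  rw [← measureReal_iUnion_fintype hdisj hmeas hfin]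
  exact measureReal_mono (Set.iUnion_subset hsub) hA

theorem measureReal_le_mul_of_le_ofReal_mul {s t : Set Ω} {a : ℝ} (ha : 0 ≤ a) (ht : μ t ≠ ⊤)
    (h : μ s ≤ ENNReal.ofReal a * μ t) : μ.real s ≤ a * μ.real t := by
  calc μ.real s ≤ (ENNReal.ofReal a * μ t).toReal :=
        ENNReal.toReal_mono (ENNReal.mul_ne_top ENNReal.ofReal_ne_top ht) h
    _ = a * μ.real t := by rw [ENNReal.toReal_mul, ENNReal.toReal_ofReal ha, measureReal_def]

theorem setIntegral_le_mul_measureReal_of_cover {A : Set Ω} {B B' : ι → Set Ω} {f : Ω → ℝ}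
    {c Λ : ℝ} (hf : 0 ≤ᵐ[μ] f) (hfi : ∀ i, IntegrableOn f (B i) μ) (hc : 0 ≤ c) (hΛ : 0 ≤ Λ)
    (hA : μ A ≠ ⊤) (hcover : A ⊆ ⋃ i, B i) (hB'meas : ∀ i, MeasurableSet (B' i))
    (hdisj : Pairwise fun i j => Disjoint (B' i) (B' j)) (hsubA : ∀ i, B' i ⊆ A)
    (havg : ∀ i, ∫ ω in B i, f ω ∂μ ≤ c * μ.real (B i))
    (hdouble : ∀ i, μ.real (B i) ≤ Λ * μ.real (B' i)) :
    ∫ ω in A, f ω ∂μ ≤ Λ * c * μ.real A :=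
  calc ∫ ω in A, f ω ∂μ ≤ ∑ i, ∫ ω in B i, f ω ∂μ :=
        setIntegral_le_sum_setIntegral_of_subset_iUnion hf hfi hcover
    _ ≤ ∑ i, c * (Λ * μ.real (B' i)) :=
        Finset.sum_le_sum fun i _ => (havg i).trans (mul_le_mul_of_nonneg_left (hdouble i) hc)
    _ = Λ * c * ∑ i, μ.real (B' i) := by rw [Finset.mul_sum]; ring_nf
    _ ≤ Λ * c * μ.real A := by
        gcongr
        exact sum_measureReal_le_of_pairwise_disjoint hB'meas hdisj hsubA hA

end

theorem stmt10_general {Ω : Type*} [MeasurableSpace Ω] (μ : Measure Ω) (N : ℕ)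
    (A : Set Ω) (B B' : Fin N → Set Ω) (f : Ω → ℝ) (k p Λ : ℝ)
    (hk : 0 ≤ k) (hΛ : 1 ≤ Λ)
    (hB'meas : ∀ i, MeasurableSet (B' i))
    (hf : ∀ ω, 0 ≤ f ω) (hfint : Integrable f μ)
    (hcover : A ⊆ ⋃ i, B i)
    (hsubA : ∀ i, B' i ⊆ A)
    (hdisj : Pairwise fun i j => Disjoint (B' i) (B' j))
    (hBfin : ∀ i, μ (B i) ≠ ⊤) (hBpos : ∀ i, μ (B i) ≠ 0)
    (hAfin : μ A ≠ ⊤)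
    (hdouble : ∀ i, μ (B i) ≤ ENNReal.ofReal Λ * μ (B' i))
    (havg : ∀ i, (1 / (μ (B i)).toReal) * ∫ ω in B i, f ω ∂μ ≤ k ^ p) :
    (1 / (μ A).toReal) * ∫ ω in A, f ω ∂μ ≤ Λ * k ^ p := by
  have hΛ₀ : 0 ≤ Λ := zero_le_one.trans hΛ
  have hkp : 0 ≤ k ^ p := Real.rpow_nonneg hk p
  have havg' (i : Fin N) : ∫ ω in B i, f ω ∂μ ≤ k ^ p * μ.real (B i) := by
    have hpos : 0 < μ.real (B i) := ENNReal.toReal_pos (hBpos i) (hBfin i)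
    have h := havg i
    rw [one_div_mul_eq_div] at h
    exact (div_le_iff₀ hpos).1 h
  have hdouble' (i : Fin N) : μ.real (B i) ≤ Λ * μ.real (B' i) :=
    measureReal_le_mul_of_le_ofReal_mul hΛ₀
      (ne_top_of_le_ne_top hAfin (measure_mono (hsubA i))) (hdouble i)
  rw [one_div_mul_eq_div]
  exact div_le_of_le_mul₀ measureReal_nonneg (by positivity)
    (setIntegral_le_mul_measureReal_of_cover (ae_of_all _ hf) (fun i => hfint.integrableOn) hkp
      hΛ₀ hAfin hcover hB'meas hdisj hsubA havg' hdouble')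

theorem stmt10 {Ω : Type*} [MeasurableSpace Ω] (μ : Measure Ω) (N : ℕ)
    (A : Set Ω) (B B' : Fin N → Set Ω) (f : Ω → ℝ) (k p Λ : ℝ)
    (hk : 0 ≤ k) (hp : 0 < p) (hΛ : 1 ≤ Λ)
    (hAmeas : MeasurableSet A) (hBmeas : ∀ i, MeasurableSet (B i))
    (hB'meas : ∀ i, MeasurableSet (B' i))
    (hf : ∀ ω, 0 ≤ f ω) (hfint : Integrable f μ)
    (hcover : A ⊆ ⋃ i, B i)
    (hsub : ∀ i, B' i ⊆ B i) (hsubA : ∀ i, B' i ⊆ A)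
    (hdisj : Pairwise fun i j => Disjoint (B' i) (B' j))
    (hBfin : ∀ i, μ (B i) ≠ ⊤) (hBpos : ∀ i, μ (B i) ≠ 0)
    (hAfin : μ A ≠ ⊤) (hApos : μ A ≠ 0)
    (hdouble : ∀ i, μ (B i) ≤ ENNReal.ofReal Λ * μ (B' i))
    (havg : ∀ i, (1 / (μ (B i)).toReal) * ∫ ω in B i, f ω ∂μ ≤ k ^ p) :
    (1 / (μ A).toReal) * ∫ ω in A, f ω ∂μ ≤ Λ * k ^ p :=
  stmt10_general μ N A B B' f k p Λ hk hΛ hB'meas hf hfint hcover hsubA hdisj hBfin hBpos hAfin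
    hdouble havg
end
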